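/- arXiv:1705.00427 — 7 statements merged into one kernel-verified Lean document; each statement's English description precedes it below -/
import Mathlib

section
/- For real numbers 0 ≤ a < b, the function φ(x) = (1 - x^a)/(1 - x^b) is nonincreasing on (0,1); moreover, if a > 0 then φ is strictly decreasing on (0,1). -/
/-! Substituting `s = x ^ b` turns `(1 - x ^ a) / (1 - x ^ b)` into `(1 - s ^ c) / (1 - s)` with
`c = a / b ∈ [0, 1)`: the slope of the secant of the concave function `s ↦ s ^ c` through the
point `(1, 1)`. Such slopes decrease in `s`, strictly when `c > 0` (strict concavity), and
`x ↦ x ^ b` is increasing. -/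

open Set

section Secant

variable {s : Set ℝ} {f : ℝ → ℝ} {a : ℝ}

lemma ConcaveOn.antitoneOn_secant (hf : ConcaveOn ℝ s f) (ha : a ∈ s) :
    AntitoneOn (fun x => (f x - f a) / (x - a)) (s \ {a}) := by
  intro x hx y hy hxy
  convert neg_le_neg (hf.neg.secant_mono ha hx.1 hy.1 hx.2 hy.2 hxy) using 1 <;>
    simp only [Pi.neg_apply] <;> ring

lemma StrictConcaveOn.strictAntiOn_secant (hf : StrictConcaveOn ℝ s f) (ha : a ∈ s) :
    StrictAntiOn (fun x => (f x - f a) / (x - a)) (s \ {a}) :=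
  fun _ hx _ hy hxy => hf.secant_strict_mono ha hx.1 hy.1 hx.2 hy.2 hxy

end Secant

namespace Real

lemma strictMonoOn_rpow_Ioo {b : ℝ} (hb : 0 < b) : StrictMonoOn (· ^ b) (Ioo (0 : ℝ) 1) :=
  (strictMonoOn_rpow_Ici_of_exponent_pos hb).mono fun _ hx => mem_Ici.2 hx.1.le

lemma mapsTo_rpow_Ioo_Ici_diff_one {b : ℝ} (hb : 0 < b) :
    MapsTo (· ^ b) (Ioo (0 : ℝ) 1) (Ici 0 \ {1}) :=
  fun _ hx => ⟨rpow_nonneg hx.1.le b, (rpow_lt_one hx.1.le hx.2 hb).ne⟩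

lemma one_sub_rpow_div_one_sub_rpow_eq_secant {a b x : ℝ} (hb : b ≠ 0) (hx : 0 ≤ x) :
    (1 - x ^ a) / (1 - x ^ b) = ((x ^ b) ^ (a / b) - 1 ^ (a / b)) / (x ^ b - 1) := by
  rw [← rpow_mul hx, mul_div_cancel₀ a hb, one_rpow, ← neg_div_neg_eq, neg_sub, neg_sub]

end Real

theorem stmt_1 (a b : ℝ) (ha : 0 ≤ a) (hab : a < b) :
    AntitoneOn (fun x : ℝ => (1 - x ^ a) / (1 - x ^ b)) (Ioo 0 1) ∧
    (0 < a → StrictAntiOn (fun x : ℝ => (1 - x ^ a) / (1 - x ^ b)) (Ioo 0 1)) := by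
  have hb : 0 < b := ha.trans_lt hab
  have hc : a / b < 1 := (div_lt_one hb).mpr hab
  have hone : (1 : ℝ) ∈ Ici 0 := mem_Ici.2 zero_le_one
  have hφ : EqOn (fun x => ((x ^ b) ^ (a / b) - 1 ^ (a / b)) / (x ^ b - 1))
      (fun x : ℝ => (1 - x ^ a) / (1 - x ^ b)) (Ioo 0 1) :=
    fun x hx => (Real.one_sub_rpow_div_one_sub_rpow_eq_secant hb.ne' hx.1.le).symm
  have hmono := Real.strictMonoOn_rpow_Ioo hb
  have hmaps := Real.mapsTo_rpow_Ioo_Ici_diff_one hb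
  refine ⟨?_, fun ha' => ?_⟩
  · have hconc := Real.concaveOn_rpow (div_nonneg ha hb.le) hc.le
    exact ((hconc.antitoneOn_secant hone).comp_MonotoneOn hmono.monotoneOn hmaps).congr hφ
  · have hconc := Real.strictConcaveOn_rpow (div_pos ha' hb) hc
    exact ((hconc.strictAntiOn_secant hone).comp_strictMonoOn hmono hmaps).congr hφ
end

section
/- For real numbers 0 < a < b, the function ψ(x) = (1 - x^a)(1 + x^b)/(1 - x^{a+b}) is strictly decreasing on (0,1). -/
/-!
Substituting `x = exp (-t)` turns `ψ` into `1 - sinh ((b - a) t / 2) / sinh ((a + b) t / 2)`, so it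
suffices that `t ↦ sinh (p t) / sinh (q t)` is strictly decreasing on `(0, ∞)` for `0 < p < q`.
By the product-to-sum formulas its derivative has the sign of
`(q + p) sinh ((q - p) t) - (q - p) sinh ((q + p) t)`, which is negative because `sinh u / u` is
strictly increasing on `(0, ∞)`: `sinh` is strictly convex there and vanishes at `0`.
-/

open Real Set

lemma strictConvexOn_sinh : StrictConvexOn ℝ (Ici 0) sinh :=
  strictConvexOn_of_deriv2_pos (convex_Ici 0) continuous_sinh.continuousOn fun x hx => by
    rw [interior_Ici] at hx
    simpa [Real.deriv_sinh, Real.deriv_cosh] using hx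

lemma sinh_div_self_lt_sinh_div_self {u v : ℝ} (hu : 0 < u) (huv : u < v) :
    sinh u / u < sinh v / v := by
  have hv : 0 < v := hu.trans huv
  simpa using strictConvexOn_sinh.secant_strict_mono self_mem_Ici hu.le hv.le hu.ne' hv.ne' huv

lemma mul_sinh_mul_lt_mul_sinh_mul {p q t : ℝ} (hp : 0 < p) (hpq : p < q) (ht : 0 < t) :
    q * sinh (p * t) < p * sinh (q * t) := by
  have hq : 0 < q := hp.trans hpq
  have h := sinh_div_self_lt_sinh_div_self (mul_pos hp ht) (mul_lt_mul_of_pos_right hpq ht)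
  rw [div_lt_div_iff₀ (mul_pos hp ht) (mul_pos hq ht)] at h
  nlinarith

lemma hasDerivAt_sinh_mul_div_sinh_mul (p q t : ℝ) (ht : sinh (q * t) ≠ 0) :
    HasDerivAt (fun t => sinh (p * t) / sinh (q * t))
      ((p * cosh (p * t) * sinh (q * t) - q * sinh (p * t) * cosh (q * t)) / sinh (q * t) ^ 2)
      t := by
  have hp : HasDerivAt (fun t => sinh (p * t)) (cosh (p * t) * p) t := by
    simpa using ((hasDerivAt_id t).const_mul p).sinh
  have hq : HasDerivAt (fun t => sinh (q * t)) (cosh (q * t) * q) t := by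
    simpa using ((hasDerivAt_id t).const_mul q).sinh
  exact (hp.div hq ht).congr_deriv (by ring)

lemma strictAntiOn_sinh_mul_div_sinh_mul {p q : ℝ} (hp : 0 < p) (hpq : p < q) :
    StrictAntiOn (fun t => sinh (p * t) / sinh (q * t)) (Ioi 0) := by
  have hq : 0 < q := hp.trans hpq
  have hden : ∀ t ∈ Ioi (0 : ℝ), 0 < sinh (q * t) := fun t ht =>
    sinh_pos_iff.2 (mul_pos hq ht)
  apply strictAntiOn_of_deriv_neg (convex_Ioi 0)
  · exact fun t ht =>
      (hasDerivAt_sinh_mul_div_sinh_mul p q t (hden t ht).ne').continuousAt.continuousWithinAt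
  · intro t ht
    rw [interior_Ioi] at ht
    rw [(hasDerivAt_sinh_mul_div_sinh_mul p q t (hden t ht).ne').deriv]
    refine div_neg_of_neg_of_pos ?_ (pow_pos (hden t ht) 2)
    have product_to_sum :
        2 * (p * cosh (p * t) * sinh (q * t) - q * sinh (p * t) * cosh (q * t)) =
          (q + p) * sinh ((q - p) * t) - (q - p) * sinh ((q + p) * t) := by
      simp only [add_mul, sub_mul, sinh_add, sinh_sub]
      ring
    linarith [mul_sinh_mul_lt_mul_sinh_mul (sub_pos.2 hpq) (by linarith : q - p < q + p) ht]

lemma exp_sub_exp (u v : ℝ) : exp u - exp v = 2 * exp ((u + v) / 2) * sinh ((u - v) / 2) := by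
  calc exp u - exp v = exp ((u + v) / 2 + (u - v) / 2) - exp ((u + v) / 2 + -((u - v) / 2)) := by
        ring_nf
    _ = 2 * exp ((u + v) / 2) * sinh ((u - v) / 2) := by
        rw [exp_add, exp_add, sinh_eq]
        ring

lemma rpow_sub_rpow_div_one_sub_rpow {x : ℝ} (hx : 0 < x) (a b : ℝ) :
    (x ^ a - x ^ b) / (1 - x ^ (a + b)) =
      sinh ((b - a) / 2 * -log x) / sinh ((a + b) / 2 * -log x) := by
  simp only [rpow_def_of_pos hx]
  rw [← exp_zero, exp_sub_exp, exp_sub_exp, zero_add, ← mul_add,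
    mul_div_mul_left _ _ (by positivity)]
  congr 2 <;> ring

theorem stmt_3 (a b : ℝ) (ha : 0 < a) (hab : a < b) :
    StrictAntiOn (fun x : ℝ => (1 - x ^ a) * (1 + x ^ b) / (1 - x ^ (a + b))) (Ioo 0 1) := by
  have hg : StrictMonoOn (fun x : ℝ => (x ^ a - x ^ b) / (1 - x ^ (a + b))) (Ioo 0 1) := by
    intro x hx y hy hxy
    simp only [rpow_sub_rpow_div_one_sub_rpow hx.1, rpow_sub_rpow_div_one_sub_rpow hy.1]
    refine strictAntiOn_sinh_mul_div_sinh_mul (p := (b - a) / 2) (q := (a + b) / 2)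
      (by linarith) (by linarith) (neg_pos.2 (log_neg hy.1 hy.2)) (neg_pos.2 (log_neg hx.1 hx.2)) ?_
    exact neg_lt_neg (log_lt_log hx.1 hxy)
  have hψ : ∀ x ∈ Ioo (0 : ℝ) 1, (1 - x ^ a) * (1 + x ^ b) / (1 - x ^ (a + b)) =
      1 - (x ^ a - x ^ b) / (1 - x ^ (a + b)) := by
    intro x hx
    have hden : 1 - x ^ (a + b) ≠ 0 := (sub_pos.2 (rpow_lt_one hx.1.le hx.2 (by linarith))).ne'
    rw [eq_sub_iff_add_eq, ← add_div, div_eq_one_iff_eq hden, rpow_add hx.1]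
    ring
  intro x hx y hy hxy
  simp only [hψ x hx, hψ y hy]
  linarith [hg hx hy hxy]
end

section
/- Let p > 1, q > 1, r > 1, m ∈ (0,1), x ∈ (0,1), with q ≤ (2r-1)p. Set R := (1-m^q)/(1+m^{r-1}) and D := (1 - (1-m^{r-1})x^{r-1})^{1/(r-1)}. Then 1 - R - R·(mx)^{r-1} - (mx)^q > D^{(2r-1)p}·(1 - R + R·(mx)^{r-1}/D^{r-1} - (mx)^q/D^q). -/
/-!
Put `a = m ^ (r - 1)`, `y = x ^ (r - 1)`, `u = D ^ (r - 1) = 1 - (1 - a) y` and rescale the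
exponents to `t = q / (r - 1) ≤ s = (2r - 1) p / (r - 1)`, so that `s > 2`. Then `(1 + a)` times
the difference of the two sides is `C - u ^ (s - t) H`, where `C > 0` and `H` do not depend on `s`
(`gapConst`, `gapCoeff`). Only `H > 0` needs work, and then:
* for `t > 2`, the ratio `(1 - v ^ t) / ((1 - v) (1 + v ^ (t - 1)))` increases on `(0, 1)`, which
  gives `H < C`; its logarithmic derivative is positive because `τ sinh L < sinh (τ L)` for
  `τ > 1`, `L > 0`;
* for `t ≤ 2`, the ratio `(1 + v) (1 - v) ^ (1 - t) / (1 - v ^ (2 - t))` increases on `(0, 1)`,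
  which gives `u ^ 2 H ≤ u ^ t C`, and `u ^ s < u ^ 2`.
-/

open Real Set

lemma strictMonoOn_Ioo_of_hasDerivAt_pos {a b : ℝ} {f f' : ℝ → ℝ}
    (hf : ∀ x ∈ Ioo a b, HasDerivAt f (f' x) x) (hf' : ∀ x ∈ Ioo a b, 0 < f' x) :
    StrictMonoOn f (Ioo a b) :=
  strictMonoOn_of_hasDerivWithinAt_pos (convex_Ioo a b)
    (fun x hx => (hf x hx).continuousAt.continuousWithinAt)
    (fun x hx => (hf x (interior_subset hx)).hasDerivWithinAt)
    (fun x hx => hf' x (interior_subset hx))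

lemma strictMonoOn_of_log {f : ℝ → ℝ} {s : Set ℝ} (hpos : ∀ x ∈ s, 0 < f x)
    (hlog : StrictMonoOn (fun x => log (f x)) s) : StrictMonoOn f s :=
  fun x hx y hy hxy => (log_lt_log_iff (hpos x hx) (hpos y hy)).1 (hlog hx hy hxy)

lemma mul_sinh_lt_sinh_mul {τ L : ℝ} (hτ : 1 < τ) (hL : 0 < L) :
    τ * sinh L < sinh (τ * L) := by
  have hderiv : ∀ x, HasDerivAt (fun x => sinh (τ * x) - τ * sinh x)
      (cosh (τ * x) * τ - τ * cosh x) x := fun x => by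
    have h := ((hasDerivAt_id x).const_mul τ).sinh
    simp only [id, mul_one] at h
    exact h.sub ((hasDerivAt_sinh x).const_mul τ)
  have hmono : StrictMonoOn (fun x => sinh (τ * x) - τ * sinh x) (Ici 0) := by
    refine strictMonoOn_of_hasDerivWithinAt_pos (convex_Ici 0)
      (fun x _ => (hderiv x).continuousAt.continuousWithinAt)
      (fun x _ => (hderiv x).hasDerivWithinAt) fun x hx => ?_
    rw [interior_Ici, mem_Ioi] at hx
    have hτx : x < τ * x := by nlinarith
    have : cosh x < cosh (τ * x) := cosh_lt_cosh.2 <| by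
      rwa [abs_of_pos hx, abs_of_pos (hx.trans hτx)]
    nlinarith
  simpa using hmono (mem_Ici.2 le_rfl) hL.le hL

lemma mul_rpow_mul_one_sub_sq_lt {c τ : ℝ} (hc0 : 0 < c) (hc1 : c < 1) (hτ : 1 < τ) :
    τ * c ^ (τ - 1) * (1 - c ^ 2) < 1 - c ^ (2 * τ) := by
  obtain ⟨L, hL, rfl⟩ : ∃ L, 0 < L ∧ c = exp (-L) :=
    ⟨-log c, by linarith [log_neg hc0 hc1], by rw [neg_neg, exp_log hc0]⟩
  -- both sides are `2 exp (-τ L)` times the two sides of `τ sinh L < sinh (τ L)`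
  have hsinh := mul_lt_mul_of_pos_left (mul_sinh_lt_sinh_mul hτ hL)
    (by positivity : 0 < 2 * exp (-(τ * L)))
  have e1 : exp (-L) ^ (τ - 1) = exp (-(τ * L)) * exp L := by
    rw [← exp_mul, ← exp_add]; ring_nf
  have e2 : exp (-L) ^ (2 * τ) = exp (-(τ * L)) ^ 2 := by
    rw [← exp_mul, ← exp_nat_mul]; ring_nf
  have e3 : exp L * exp (-L) = 1 := by rw [← exp_add, add_neg_cancel, exp_zero]
  have e4 : exp (τ * L) * exp (-(τ * L)) = 1 := by rw [← exp_add, add_neg_cancel, exp_zero]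
  rw [sinh_eq, sinh_eq] at hsinh
  rw [e1, e2]
  linear_combination hsinh - (τ * exp (-(τ * L)) * exp (-L)) * e3 + e4

lemma strictMonoOn_one_sub_rpow_div {t : ℝ} (ht : 2 < t) :
    StrictMonoOn (fun v : ℝ => (1 - v ^ t) / ((1 - v) * (1 + v ^ (t - 1)))) (Ioo 0 1) := by
  have hvt : ∀ v ∈ Ioo (0 : ℝ) 1, v ^ t < 1 := fun v hv =>
    rpow_lt_one hv.1.le hv.2 (by linarith)
  refine strictMonoOn_of_log (fun v hv => div_pos (by linarith [hvt v hv])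
    (mul_pos (by linarith [hv.2]) (by linarith [rpow_pos_of_pos hv.1 (t - 1)]))) ?_
  refine strictMonoOn_Ioo_of_hasDerivAt_pos
    (f' := fun v => -(t * v ^ (t - 1)) / (1 - v ^ t) - -1 / (1 - v)
      - (t - 1) * v ^ (t - 1 - 1) / (1 + v ^ (t - 1)))
    (fun v hv => ?_) (fun v hv => ?_)
  · obtain ⟨hv0, hv1⟩ := hv
    have h1 := ((hasDerivAt_rpow_const (p := t) (Or.inl hv0.ne')).const_sub 1).log
      (by linarith [hvt v ⟨hv0, hv1⟩])
    have h2 := ((hasDerivAt_id v).const_sub 1).log (by rw [id]; linarith)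
    have h3 := ((hasDerivAt_rpow_const (p := t - 1) (Or.inl hv0.ne')).const_add 1).log
      (by linarith [rpow_pos_of_pos hv0 (t - 1)])
    have heq : (fun v : ℝ => log ((1 - v ^ t) / ((1 - v) * (1 + v ^ (t - 1))))) =ᶠ[nhds v]
        fun v => log (1 - v ^ t) - log (1 - v) - log (1 + v ^ (t - 1)) := by
      filter_upwards [Ioo_mem_nhds hv0 hv1] with w hw
      have h1w : 0 < 1 - w := by linarith [hw.2]
      have h1w' : 0 < 1 + w ^ (t - 1) := by linarith [rpow_pos_of_pos hw.1 (t - 1)]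
      rw [log_div (by linarith [hvt w hw]) (by positivity), log_mul h1w.ne' h1w'.ne', sub_sub]
    exact ((h1.sub h2).sub h3).congr_of_eventuallyEq heq
  · obtain ⟨hv0, hv1⟩ := hv
    -- with `w = v ^ (t - 2)` the numerator of the derivative is `1 - (v w)² - (t - 1) w (1 - v²)`
    have hkey := mul_rpow_mul_one_sub_sq_lt hv0 hv1 (show 1 < t - 1 by linarith)
    have hw := rpow_pos_of_pos hv0 (t - 1 - 1)
    have e1 : v ^ (t - 1) = v * v ^ (t - 1 - 1) := by
      rw [← rpow_one_add' hv0.le (by linarith)]; ring_nf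
    have e2 : v ^ t = v ^ 2 * v ^ (t - 1 - 1) := by
      rw [sq, mul_assoc, ← e1, ← rpow_one_add' hv0.le (by linarith)]; ring_nf
    have e3 : v ^ (2 * (t - 1)) = (v * v ^ (t - 1 - 1)) ^ 2 := by
      rw [← e1, ← rpow_natCast, ← rpow_mul hv0.le]; ring_nf
    have hvt' := hvt v ⟨hv0, hv1⟩
    rw [e3] at hkey
    rw [e2] at hvt' ⊢
    rw [e1]
    set w := v ^ (t - 1 - 1)
    have h1 : 1 - v ^ 2 * w ≠ 0 := by linarith
    have h2 : 1 - v ≠ 0 := by linarith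
    have h3 : 1 + v * w ≠ 0 := by nlinarith
    have : -(t * (v * w)) / (1 - v ^ 2 * w) - -1 / (1 - v) - (t - 1) * w / (1 + v * w)
        = (1 - (v * w) ^ 2 - (t - 1) * w * (1 - v ^ 2))
          / ((1 - v ^ 2 * w) * (1 - v) * (1 + v * w)) := by
      field_simp
      ring
    rw [this]
    apply div_pos
    · linarith
    · apply mul_pos (mul_pos _ _) _ <;> nlinarith

lemma strictMonoOn_one_add_mul_rpow_div {β : ℝ} (hβ0 : 0 < β) (hβ2 : β < 2) :
    StrictMonoOn (fun v : ℝ => (1 + v) * (1 - v) ^ (β - 1) / (1 - v ^ β)) (Ioo 0 1) := by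
  have hvβ : ∀ v ∈ Ioo (0 : ℝ) 1, v ^ β < 1 := fun v hv => rpow_lt_one hv.1.le hv.2 hβ0
  refine strictMonoOn_of_log (fun v hv => div_pos (mul_pos (by linarith [hv.1])
    (rpow_pos_of_pos (by linarith [hv.2]) _)) (by linarith [hvβ v hv])) ?_
  refine strictMonoOn_Ioo_of_hasDerivAt_pos
    (f' := fun v => 1 / (1 + v) + (β - 1) * (-1 / (1 - v)) - -(β * v ^ (β - 1)) / (1 - v ^ β))
    (fun v hv => ?_) (fun v hv => ?_)
  · obtain ⟨hv0, hv1⟩ := hv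
    have h1 := ((hasDerivAt_id v).const_add 1).log (by rw [id]; linarith)
    have h2 := (((hasDerivAt_id v).const_sub 1).log (by rw [id]; linarith)).const_mul (β - 1)
    have h3 := ((hasDerivAt_rpow_const (p := β) (Or.inl hv0.ne')).const_sub 1).log
      (by linarith [hvβ v ⟨hv0, hv1⟩])
    have heq : (fun v : ℝ => log ((1 + v) * (1 - v) ^ (β - 1) / (1 - v ^ β))) =ᶠ[nhds v]
        fun v => log (1 + v) + (β - 1) * log (1 - v) - log (1 - v ^ β) := by
      filter_upwards [Ioo_mem_nhds hv0 hv1] with w hw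
      have h1w : 0 < 1 - w := by linarith [hw.2]
      have h1w' : 0 < 1 + w := by linarith [hw.1]
      rw [log_div (by positivity) (by linarith [hvβ w hw]),
        log_mul (by linarith [hw.1]) (by positivity), log_rpow h1w]
    exact ((h1.add h2).sub h3).congr_of_eventuallyEq heq
  · obtain ⟨hv0, hv1⟩ := hv
    have hw : v ≤ v ^ (β - 1) := by
      simpa using rpow_le_rpow_of_exponent_ge hv0 hv1.le (show β - 1 ≤ 1 by linarith)
    have hvw : v ^ β = v * v ^ (β - 1) := by
      rw [← rpow_one_add' hv0.le (by linarith)]; ring_nf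
    have hwv := hvβ v ⟨hv0, hv1⟩
    rw [hvw] at hwv ⊢
    set w := v ^ (β - 1)
    have h1 : 1 + v ≠ 0 := by linarith
    have h2 : 1 - v ≠ 0 := by linarith
    have h3 : 1 - v * w ≠ 0 := by linarith
    have : 1 / (1 + v) + (β - 1) * (-1 / (1 - v)) - -(β * w) / (1 - v * w)
        = ((2 - β) * (1 - v * w) + β * (w - v)) / ((1 + v) * (1 - v) * (1 - v * w)) := by
      field_simp
      ring
    rw [this]
    apply div_pos
    · nlinarith
    · apply mul_pos (mul_pos _ _) _ <;> linarith

noncomputable def gapConst (a y t : ℝ) : ℝ :=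
  a + a ^ t - (1 - a ^ t) * (a * y) - (1 + a) * (a * y) ^ t

noncomputable def gapCoeff (a y u t : ℝ) : ℝ :=
  (a + a ^ t) * u ^ t + (1 - a ^ t) * (a * y) * u ^ (t - 1) - (1 + a) * (a * y) ^ t

section KeyEstimate

variable {a y u t s : ℝ}

lemma mem_Ioo_of_one_sub_eq_mul (ha1 : a < 1) (hy0 : 0 < y) (hy1 : y < 1)
    (hu : 1 - u = (1 - a) * y) : u ∈ Ioo a 1 :=
  ⟨by nlinarith, by nlinarith⟩

lemma gapConst_pos (ha0 : 0 < a) (ha1 : a < 1) (hy0 : 0 < y) (hy1 : y < 1) (ht : 0 < t) :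
    0 < gapConst a y t := by
  have hA := rpow_lt_one ha0.le ha1 ht
  have hY := rpow_lt_one hy0.le hy1 ht
  have hA0 := rpow_pos_of_pos ha0 t
  have : gapConst a y t = (1 - a ^ t) * a * (1 - y) + (1 + a) * a ^ t * (1 - y ^ t) := by
    rw [gapConst, mul_rpow ha0.le hy0.le]; ring
  rw [this]
  exact add_pos (mul_pos (mul_pos (by linarith) ha0) (by linarith))
    (mul_pos (mul_pos (by linarith) hA0) (by linarith))

lemma gapCoeff_lt_gapConst (ha0 : 0 < a) (hau : a < u) (hu1 : u < 1)
    (hu : 1 - u = (1 - a) * y) (ht : 2 < t) : gapCoeff a y u t < gapConst a y t := by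
  have ha1 : a < 1 := hau.trans hu1
  have hu0 : 0 < u := ha0.trans hau
  have hmono := strictMonoOn_one_sub_rpow_div ht ⟨ha0, ha1⟩ ⟨hu0, hu1⟩ hau
  have hpos : ∀ v : ℝ, 0 < v → v < 1 → 0 < (1 - v) * (1 + v ^ (t - 1)) := fun v hv0 hv1 =>
    mul_pos (by linarith) (by linarith [rpow_pos_of_pos hv0 (t - 1)])
  rw [div_lt_div_iff₀ (hpos a ha0 ha1) (hpos u hu0 hu1)] at hmono
  have haa : a * a ^ (t - 1) = a ^ t := by
    rw [← rpow_one_add' ha0.le (by linarith)]; ring_nf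
  have : gapConst a y t - gapCoeff a y u t = a * ((1 - u ^ t) * ((1 - a) * (1 + a ^ (t - 1)))
      - (1 - a ^ t) * ((1 - u) * (1 + u ^ (t - 1)))) / (1 - a) := by
    rw [eq_div_iff (by linarith), gapConst, gapCoeff]
    linear_combination -((1 - u ^ t) * (1 - a)) * haa + (a * (1 - a ^ t) * (1 + u ^ (t - 1))) * hu
  have := div_pos (mul_pos ha0 (sub_pos.2 hmono)) (sub_pos.2 ha1)
  linarith

lemma one_add_mul_rpow_mul_le (ha0 : 0 < a) (hau : a < u) (hu1 : u < 1) (hy0 : 0 < y)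
    (hu : 1 - u = (1 - a) * y) (ht : 0 < t) (ht2 : t ≤ 2) :
    (1 + a) * y ^ t * (1 - u ^ (2 - t)) ≤ (1 + u) * y * (1 - a ^ (2 - t)) := by
  rcases ht2.lt_or_eq with ht2 | rfl
  swap
  · simp
  have ha1 : a < 1 := hau.trans hu1
  have hu0 : 0 < u := ha0.trans hau
  have hmono := strictMonoOn_one_add_mul_rpow_div (β := 2 - t) (by linarith) (by linarith)
    ⟨ha0, ha1⟩ ⟨hu0, hu1⟩ hau
  rw [div_lt_div_iff₀ (by linarith [rpow_lt_one ha0.le ha1 (show 0 < 2 - t by linarith)])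
    (by linarith [rpow_lt_one hu0.le hu1 (show 0 < 2 - t by linarith)])] at hmono
  have hrel : (1 - u) ^ (2 - t - 1) * y ^ t = (1 - a) ^ (2 - t - 1) * y := by
    rw [hu, mul_rpow (by linarith) hy0.le, mul_assoc, ← rpow_add hy0]; ring_nf; rw [rpow_one]
  have hA := rpow_pos_of_pos (show 0 < 1 - a by linarith) (2 - t - 1)
  refine (lt_of_mul_lt_mul_left ?_ hA.le).le
  have := mul_lt_mul_of_pos_right hmono (rpow_pos_of_pos hy0 t)
  linear_combination this + (1 + u) * (1 - a ^ (2 - t)) * hrel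

lemma sq_mul_gapCoeff_le (ha0 : 0 < a) (hau : a < u) (hu1 : u < 1) (hy0 : 0 < y)
    (hu : 1 - u = (1 - a) * y) (ht : 0 < t) (ht2 : t ≤ 2) :
    u ^ 2 * gapCoeff a y u t ≤ u ^ t * gapConst a y t := by
  have hu0 : 0 < u := ha0.trans hau
  have haa : a ^ t * a ^ (2 - t) = a ^ 2 := by
    rw [← rpow_add ha0, ← rpow_natCast]; norm_num
  have huu : u ^ t * u ^ (2 - t) = u ^ 2 := by
    rw [← rpow_add hu0, ← rpow_natCast]; norm_num
  have huu' : u * u ^ (t - 1) = u ^ t := by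
    rw [← rpow_one_add' hu0.le (by linarith)]; ring_nf
  have : u ^ t * gapConst a y t - u ^ 2 * gapCoeff a y u t = u ^ t * a ^ t *
      ((1 + u) * y * (1 - a ^ (2 - t)) - (1 + a) * y ^ t * (1 - u ^ (2 - t))) := by
    rw [gapConst, gapCoeff, mul_rpow ha0.le hy0.le]
    linear_combination ((1 + u) * y * u ^ t) * haa - ((1 + a) * a ^ t * y ^ t) * huu
      - ((1 - a ^ t) * a * y * u) * huu' + (u ^ t * (1 + u) * (a + a ^ t)) * hu
  have := mul_nonneg (mul_pos (rpow_pos_of_pos hu0 t) (rpow_pos_of_pos ha0 t)).le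
    (sub_nonneg.2 (one_add_mul_rpow_mul_le ha0 hau hu1 hy0 hu ht ht2))
  linarith

lemma gapConst_sub_rpow_mul_gapCoeff_pos (ha0 : 0 < a) (ha1 : a < 1) (hy0 : 0 < y) (hy1 : y < 1)
    (hu : 1 - u = (1 - a) * y) (ht : 0 < t) (hts : t ≤ s) (hs : 2 < s) :
    0 < gapConst a y t - u ^ (s - t) * gapCoeff a y u t := by
  obtain ⟨hau, hu1⟩ := mem_Ioo_of_one_sub_eq_mul ha1 hy0 hy1 hu
  have hu0 : 0 < u := ha0.trans hau
  have hC := gapConst_pos ha0 ha1 hy0 hy1 ht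
  rcases le_or_gt (gapCoeff a y u t) 0 with hH | hH
  · nlinarith [rpow_pos_of_pos hu0 (s - t)]
  rcases le_or_gt t 2 with ht2 | ht2
  · -- multiply by `u ^ t`; then `u ^ s < u ^ 2` brings in the bound for `t ≤ 2`
    have hus : u ^ s < u ^ 2 := by
      rw [← rpow_natCast]; exact rpow_lt_rpow_of_exponent_gt hu0 hu1 (by norm_num; linarith)
    have hsplit : u ^ t * u ^ (s - t) = u ^ s := by rw [← rpow_add hu0]; ring_nf
    have := sq_mul_gapCoeff_le ha0 hau hu1 hy0 hu ht ht2
    refine pos_of_mul_pos_right (a := u ^ t) ?_ (rpow_pos_of_pos hu0 t).le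
    nlinarith
  · have := rpow_le_one hu0.le hu1.le (sub_nonneg.2 hts)
    nlinarith [gapCoeff_lt_gapConst ha0 hau hu1 hu ht2]

theorem key_estimate_rescaled {R : ℝ} (ha0 : 0 < a) (ha1 : a < 1) (hy0 : 0 < y) (hy1 : y < 1)
    (hu : 1 - u = (1 - a) * y) (ht : 0 < t) (hts : t ≤ s) (hs : 2 < s)
    (hR : R = (1 - a ^ t) / (1 + a)) :
    1 - R - R * (a * y) - (a * y) ^ t >
      u ^ s * (1 - R + R * (a * y) / u - (a * y) ^ t / u ^ t) := by
  obtain ⟨hau, -⟩ := mem_Ioo_of_one_sub_eq_mul ha1 hy0 hy1 hu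
  have hu0 : 0 < u := ha0.trans hau
  have h1 : u ^ s = u ^ (s - t) * u ^ t := by rw [← rpow_add hu0]; ring_nf
  have h2 : u ^ t = u * u ^ (t - 1) := by rw [← rpow_one_add' hu0.le (by linarith)]; ring_nf
  have hut := rpow_pos_of_pos hu0 t
  have : 1 - R - R * (a * y) - (a * y) ^ t -
      u ^ s * (1 - R + R * (a * y) / u - (a * y) ^ t / u ^ t) =
      (gapConst a y t - u ^ (s - t) * gapCoeff a y u t) / (1 + a) := by
    rw [hR, h1, gapConst, gapCoeff]
    field_simp
    rw [h2]
    ring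
  rw [gt_iff_lt, ← sub_pos, this]
  exact div_pos (gapConst_sub_rpow_mul_gapCoeff_pos ha0 ha1 hy0 hy1 hu ht hts hs) (by linarith)

end KeyEstimate

theorem stmt_10 (p q r m x : ℝ) (hp : 1 < p) (hq : 1 < q) (hr : 1 < r)
    (hm : m ∈ Set.Ioo (0:ℝ) 1) (hx : x ∈ Set.Ioo (0:ℝ) 1) (hpq : q ≤ (2 * r - 1) * p)
    (R D : ℝ) (hR : R = (1 - m ^ q) / (1 + m ^ (r - 1)))
    (hD : D = (1 - (1 - m ^ (r - 1)) * x ^ (r - 1)) ^ (1 / (r - 1))) :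
    1 - R - R * (m * x) ^ (r - 1) - (m * x) ^ q >
      D ^ ((2 * r - 1) * p) *
        (1 - R + R * (m * x) ^ (r - 1) / D ^ (r - 1) - (m * x) ^ q / D ^ q) := by
  obtain ⟨hm0, hm1⟩ := hm
  obtain ⟨hx0, hx1⟩ := hx
  have hk : 0 < r - 1 := by linarith
  have hpow : ∀ b : ℝ, 0 ≤ b → ∀ e, b ^ e = (b ^ (r - 1)) ^ (e / (r - 1)) := fun b hb e => by
    rw [← rpow_mul hb, mul_div_cancel₀ _ hk.ne']
  have ha := rpow_lt_one hm0.le hm1 hk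
  have hy := rpow_lt_one hx0.le hx1 hk
  have hu : 0 ≤ 1 - (1 - m ^ (r - 1)) * x ^ (r - 1) := by
    nlinarith [rpow_pos_of_pos hx0 (r - 1), rpow_pos_of_pos hm0 (r - 1)]
  have hDpow : ∀ e, D ^ e = (1 - (1 - m ^ (r - 1)) * x ^ (r - 1)) ^ (e / (r - 1)) := fun e => by
    rw [hD, ← rpow_mul hu, one_div_mul_eq_div]
  rw [hpow m hm0.le q] at hR
  rw [hDpow, hDpow, hDpow, div_self hk.ne', rpow_one, hpow (m * x) (by positivity) q,
    mul_rpow hm0.le hx0.le]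
  refine key_estimate_rescaled (rpow_pos_of_pos hm0 _) ha (rpow_pos_of_pos hx0 _) hy (by ring)
    (div_pos (by linarith) hk) (div_le_div_of_nonneg_right hpq hk.le) ?_ hR
  rw [lt_div_iff₀ hk]
  nlinarith
end

section
/- Let p > 1, q > 1, r > 1, m ∈ (0,1), x ∈ (0,1) with q ≤ (2r-1)p, R := (1-m^q)/(1+m^{r-1}), and D := (1 - (1-m^{r-1})x^{r-1})^{1/(r-1)}. Then m^{r-1}·x^{r-1}·(1 + D^{(2r-1)p-(r-1)})/(1 - D^{(2r-1)p}) < m^{r-1}·(1 + m^{(2r-1)p-(r-1)})/(1 - m^{(2r-1)p}). -/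
/-!
Write a = r - 1 and b = (2r-1)p - (r-1), so 0 < a < b. By the definition of D,
x^a = (1 - D^a)/(1 - m^a) and m < D < 1, so the claim says f(D) < f(m) for
f(t) = (1 - t^a)(1 + t^b)/(1 - t^(a+b)) = 1 - (t^a - t^b)/(1 - t^(a+b)).
With t = e^(-2L/(b-a)) the last quotient is sinh L / sinh(λL), λ = (a+b)/(b-a) > 1, and
u ↦ sinh u / sinh(λu) decreases on (0,∞) because tanh(λu) < λ tanh u.
-/

open Real Set

theorem sinh_mul_mul_cosh_lt {c x : ℝ} (hc : 1 < c) (hx : 0 < x) :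
    sinh (c * x) * cosh x < c * cosh (c * x) * sinh x := by
  set h : ℝ → ℝ := fun y => c * cosh (c * y) * sinh y - sinh (c * y) * cosh y
  have hderiv (y : ℝ) : HasDerivAt h ((c ^ 2 - 1) * (sinh (c * y) * sinh y)) y := by
    have hcy : HasDerivAt (fun y : ℝ => c * y) c y := by
      simpa using (hasDerivAt_id y).const_mul c
    have hs := (hasDerivAt_sinh (c * y)).comp y hcy
    have hc' := (hasDerivAt_cosh (c * y)).comp y hcy
    refine (((hc'.const_mul c).mul (hasDerivAt_sinh y)).sub
      (hs.mul (hasDerivAt_cosh y))).congr_deriv ?_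
    simp only [Function.comp_def]
    ring
  have hmono : StrictMonoOn h (Ici 0) := by
    refine strictMonoOn_of_deriv_pos (convex_Ici 0) (by fun_prop) fun y hy => ?_
    rw [interior_Ici] at hy
    rw [(hderiv y).deriv]
    have : 0 < sinh (c * y) := sinh_pos_iff.2 (by nlinarith [hy.out])
    have : 0 < sinh y := sinh_pos_iff.2 hy.out
    have : 0 < c ^ 2 - 1 := by nlinarith
    positivity
  have := hmono self_mem_Ici hx.le hx
  simp only [h, mul_zero, sinh_zero, cosh_zero] at this
  linarith

theorem strictAntiOn_sinh_div_sinh_mul {c : ℝ} (hc : 1 < c) :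
    StrictAntiOn (fun u => sinh u / sinh (c * u)) (Ioi 0) := by
  have hsinh_pos {u : ℝ} (hu : 0 < u) : 0 < sinh (c * u) := sinh_pos_iff.2 (by nlinarith)
  refine strictAntiOn_of_deriv_neg (convex_Ioi 0)
    (ContinuousOn.div (by fun_prop) (by fun_prop) fun u hu => (hsinh_pos hu).ne') fun u hu => ?_
  rw [interior_Ioi] at hu
  have hcu : HasDerivAt (fun u : ℝ => c * u) c u := by
    simpa using (hasDerivAt_id u).const_mul c
  have hd : HasDerivAt (fun u => sinh u / sinh (c * u))
      ((cosh u * sinh (c * u) - sinh u * (cosh (c * u) * c)) / sinh (c * u) ^ 2) u :=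
    (hasDerivAt_sinh u).div ((hasDerivAt_sinh (c * u)).comp u hcu) (hsinh_pos hu).ne'
  rw [hd.deriv]
  have := sinh_mul_mul_cosh_lt hc hu
  exact div_neg_of_neg_of_pos (by nlinarith) (by have := hsinh_pos hu; positivity)

theorem rpow_sub_rpow_eq_mul_sinh {t : ℝ} (ht : 0 < t) (a b : ℝ) :
    t ^ a - t ^ b = 2 * t ^ ((a + b) / 2) * sinh ((b - a) / 2 * -log t) := by
  simp only [rpow_def_of_pos ht, sinh_eq]
  rw [show ∀ E X Y : ℝ, 2 * E * ((X - Y) / 2) = E * X - E * Y from fun _ _ _ => by ring,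
    ← exp_add, ← exp_add]
  congr 2 <;> ring

theorem strictMonoOn_rpow_sub_rpow_div_one_sub_rpow {a b : ℝ} (ha : 0 < a) (hab : a < b) :
    StrictMonoOn (fun t : ℝ => (t ^ a - t ^ b) / (1 - t ^ (a + b))) (Ioo 0 1) := by
  have hba : b - a ≠ 0 := (sub_pos.2 hab).ne'
  set c := (a + b) / (b - a)
  set u : ℝ → ℝ := fun t => (b - a) / 2 * -log t
  have hc : 1 < c := by rw [lt_div_iff₀ (sub_pos.2 hab)]; linarith
  have hu_pos {t : ℝ} (ht : t ∈ Ioo 0 1) : 0 < u t :=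
    mul_pos (by linarith) (neg_pos.2 (log_neg ht.1 ht.2))
  have hratio {t : ℝ} (ht : t ∈ Ioo 0 1) :
      (t ^ a - t ^ b) / (1 - t ^ (a + b)) = sinh (u t) / sinh (c * u t) := by
    have hcu : c * u t = (a + b - 0) / 2 * -log t := by
      simp only [c, u]; field_simp; ring
    rw [rpow_sub_rpow_eq_mul_sinh ht.1, ← rpow_zero t, rpow_sub_rpow_eq_mul_sinh ht.1, hcu,
      zero_add, mul_div_mul_left _ _ (by positivity [rpow_pos_of_pos ht.1 ((a + b) / 2)])]
  intro s hs t ht hst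
  simp only [hratio hs, hratio ht]
  refine strictAntiOn_sinh_div_sinh_mul hc (hu_pos ht) (hu_pos hs) ?_
  exact mul_lt_mul_of_pos_left (neg_lt_neg (log_lt_log hs.1 hst)) (by linarith)

theorem strictAntiOn_one_sub_rpow_mul_one_add_rpow_div {a b : ℝ} (ha : 0 < a) (hab : a < b) :
    StrictAntiOn (fun t : ℝ => (1 - t ^ a) * (1 + t ^ b) / (1 - t ^ (a + b))) (Ioo 0 1) := by
  have hsplit {t : ℝ} (ht : t ∈ Ioo 0 1) : (1 - t ^ a) * (1 + t ^ b) / (1 - t ^ (a + b)) =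
      1 - (t ^ a - t ^ b) / (1 - t ^ (a + b)) := by
    have : t ^ (a + b) < 1 := rpow_lt_one ht.1.le ht.2 (by linarith)
    rw [eq_sub_iff_add_eq, ← add_div, div_eq_one_iff_eq (by linarith), rpow_add ht.1]
    ring
  intro s hs t ht hst
  simp only [hsplit hs, hsplit ht]
  linarith [strictMonoOn_rpow_sub_rpow_div_one_sub_rpow ha hab hs ht hst]

theorem rpow_one_div_mem_Ioo {a m y : ℝ} (ha : 0 < a) (hm : 0 ≤ m) (hy : y ∈ Ioo (m ^ a) 1) :
    y ^ (1 / a) ∈ Ioo m 1 := by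
  have hy0 : 0 ≤ m ^ a := rpow_nonneg hm a
  refine ⟨?_, rpow_lt_one (hy0.trans hy.1.le) hy.2 (by positivity)⟩
  calc m = (m ^ a) ^ (1 / a) := by rw [← rpow_mul hm, mul_one_div_cancel ha.ne', rpow_one]
    _ < y ^ (1 / a) := rpow_lt_rpow hy0 hy.1 (by positivity)

theorem stmt_11_general (p r m x : ℝ) (hp : 1 < p) (hr : 1 < r)
    (hm : m ∈ Set.Ioo (0:ℝ) 1) (hx : x ∈ Set.Ioo (0:ℝ) 1)
    (D : ℝ)
    (hD : D = (1 - (1 - m ^ (r - 1)) * x ^ (r - 1)) ^ (1 / (r - 1))) :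
    m ^ (r - 1) * x ^ (r - 1) * (1 + D ^ ((2 * r - 1) * p - (r - 1))) /
        (1 - D ^ ((2 * r - 1) * p)) <
      m ^ (r - 1) * (1 + m ^ ((2 * r - 1) * p - (r - 1))) / (1 - m ^ ((2 * r - 1) * p)) := by
  set a := r - 1
  set b := (2 * r - 1) * p - a
  have ha : 0 < a := by linarith
  have hab : a < b := by nlinarith
  rw [show (2 * r - 1) * p = a + b by ring]
  have hma : m ^ a ∈ Ioo 0 1 := ⟨rpow_pos_of_pos hm.1 a, rpow_lt_one hm.1.le hm.2 ha⟩
  have hxa : x ^ a ∈ Ioo 0 1 := ⟨rpow_pos_of_pos hx.1 a, rpow_lt_one hx.1.le hx.2 ha⟩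
  have hy : 1 - (1 - m ^ a) * x ^ a ∈ Ioo (m ^ a) 1 :=
    ⟨by nlinarith [hma.2, hxa.2], by nlinarith [hma.2, hxa.1]⟩
  have hDm : D ∈ Ioo m 1 := hD ▸ rpow_one_div_mem_Ioo ha hm.1.le hy
  have hxD : x ^ a = (1 - D ^ a) / (1 - m ^ a) := by
    rw [hD, one_div, rpow_inv_rpow (hma.1.trans hy.1).le ha.ne']
    field_simp [(sub_pos.2 hma.2).ne']
    ring
  have hmono := strictAntiOn_one_sub_rpow_mul_one_add_rpow_div ha hab hm
    ⟨hm.1.trans hDm.1, hDm.2⟩ hDm.1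
  rw [hxD]
  calc m ^ a * ((1 - D ^ a) / (1 - m ^ a)) * (1 + D ^ b) / (1 - D ^ (a + b))
      = m ^ a / (1 - m ^ a) * ((1 - D ^ a) * (1 + D ^ b) / (1 - D ^ (a + b))) := by ring
    _ < m ^ a / (1 - m ^ a) * ((1 - m ^ a) * (1 + m ^ b) / (1 - m ^ (a + b))) :=
      mul_lt_mul_of_pos_left hmono (div_pos hma.1 (sub_pos.2 hma.2))
    _ = m ^ a * (1 + m ^ b) / (1 - m ^ (a + b)) := by
      field_simp [(sub_pos.2 hma.2).ne']

theorem stmt_11 (p q r m x : ℝ) (hp : 1 < p) (hq : 1 < q) (hr : 1 < r)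
    (hm : m ∈ Set.Ioo (0:ℝ) 1) (hx : x ∈ Set.Ioo (0:ℝ) 1) (hpq : q ≤ (2 * r - 1) * p)
    (R D : ℝ) (hR : R = (1 - m ^ q) / (1 + m ^ (r - 1)))
    (hD : D = (1 - (1 - m ^ (r - 1)) * x ^ (r - 1)) ^ (1 / (r - 1))) :
    m ^ (r - 1) * x ^ (r - 1) * (1 + D ^ ((2 * r - 1) * p - (r - 1))) /
        (1 - D ^ ((2 * r - 1) * p)) <
      m ^ (r - 1) * (1 + m ^ ((2 * r - 1) * p - (r - 1))) / (1 - m ^ ((2 * r - 1) * p)) :=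
  stmt_11_general p r m x hp hr hm hx D hD
end

section
/- Let p > 1, q > 1, r > 1, m ∈ (0,1), x ∈ (0,1) with q ≤ (2r-1)p, and let D := (1 - (1-m^{r-1})x^{r-1})^{1/(r-1)}. Then m^q·x^q·(1 - D^{(2r-1)p-q})/(1 - D^{(2r-1)p}) ≤ m^q·(1 - m^{(2r-1)p-q})/(1 - m^{(2r-1)p}). -/
/-!
The weight `D` is the `(r-1)`-th root of a proper convex combination of `m ^ (r-1)` and `1`,
so `m < D < 1`. The factor `x ^ q` is at most `1`, and it remains to compare
`(1 - t ^ a) / (1 - t ^ b)` at `t = D` and `t = m`, for `a = (2r-1)p - q ≤ b = (2r-1)p`.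
Substituting `s = t ^ a`, its reciprocal is `(1 - s ^ (b/a)) / (1 - s)`, the slope of the
secant of the convex function `s ↦ s ^ (b/a)` from `s` to `1`, hence increasing in `s`;
so the ratio itself decreases in `t`.
-/

open Real Set

lemma rpow_one_div_one_sub_mul_mem_Ioo {m w k : ℝ} (hm : m ∈ Ioo 0 1) (hw : w ∈ Ioo 0 1)
    (hk : 0 < k) : (1 - (1 - m ^ k) * w) ^ (1 / k) ∈ Ioo m 1 := by
  have hmk0 : 0 < m ^ k := rpow_pos_of_pos hm.1 k
  have hmk1 : m ^ k < 1 := rpow_lt_one hm.1.le hm.2 hk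
  have hlow : m ^ k < 1 - (1 - m ^ k) * w := by nlinarith [hw.2]
  have hup : 1 - (1 - m ^ k) * w < 1 := by nlinarith [hw.1]
  constructor
  · calc m = (m ^ k) ^ (1 / k) := by rw [one_div, rpow_rpow_inv hm.1.le hk.ne']
      _ < (1 - (1 - m ^ k) * w) ^ (1 / k) := rpow_lt_rpow hmk0.le hlow (by positivity)
  · exact rpow_lt_one (by linarith) hup (by positivity)

lemma one_sub_rpow_div_one_sub_le {c u v : ℝ} (hc : 1 ≤ c) (hu : 0 ≤ u) (huv : u ≤ v)
    (hv : v < 1) : (1 - u ^ c) / (1 - u) ≤ (1 - v ^ c) / (1 - v) := by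
  have h := (convexOn_rpow hc).secant_mono (a := 1) (x := u) (y := v) (by simp) hu
    (hu.trans huv) (by linarith) hv.ne huv
  simpa only [one_rpow, ← neg_sub _ (1 : ℝ), neg_div_neg_eq] using h

lemma one_sub_rpow_div_one_sub_rpow_anti {a b u v : ℝ} (ha : 0 < a) (hab : a ≤ b) (hu : 0 ≤ u)
    (huv : u ≤ v) (hv : v < 1) :
    (1 - v ^ a) / (1 - v ^ b) ≤ (1 - u ^ a) / (1 - u ^ b) := by
  have hpow : ∀ t : ℝ, 0 ≤ t → t ^ b = (t ^ a) ^ (b / a) := fun t ht => by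
    rw [← rpow_mul ht, mul_div_cancel₀ b ha.ne']
  have hva : v ^ a < 1 := rpow_lt_one (hu.trans huv) hv ha
  have hua : u ^ a < 1 := (rpow_le_rpow hu huv ha.le).trans_lt hva
  have hvb : v ^ b < 1 := rpow_lt_one (hu.trans huv) hv (ha.trans_le hab)
  have hub : u ^ b < 1 := rpow_lt_one hu (huv.trans_lt hv) (ha.trans_le hab)
  have hsecant : (1 - u ^ b) / (1 - u ^ a) ≤ (1 - v ^ b) / (1 - v ^ a) := by
    rw [hpow u hu, hpow v (hu.trans huv)]
    exact one_sub_rpow_div_one_sub_le ((one_le_div ha).2 hab) (by positivity)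
      (rpow_le_rpow hu huv ha.le) hva
  rw [← inv_div (1 - v ^ b), ← inv_div (1 - u ^ b)]
  exact inv_anti₀ (div_pos (by linarith) (by linarith)) hsecant

theorem stmt_12_general (p q r m x : ℝ) (hq : 1 < q) (hr : 1 < r)
    (hm : m ∈ Set.Ioo (0:ℝ) 1) (hx : x ∈ Set.Ioo (0:ℝ) 1) (hpq : q ≤ (2 * r - 1) * p)
    (D : ℝ) (hD : D = (1 - (1 - m ^ (r - 1)) * x ^ (r - 1)) ^ (1 / (r - 1))) :
    m ^ q * x ^ q * (1 - D ^ ((2 * r - 1) * p - q)) / (1 - D ^ ((2 * r - 1) * p)) ≤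
      m ^ q * (1 - m ^ ((2 * r - 1) * p - q)) / (1 - m ^ ((2 * r - 1) * p)) := by
  have hxr : x ^ (r - 1) ∈ Ioo 0 1 :=
    ⟨rpow_pos_of_pos hx.1 _, rpow_lt_one hx.1.le hx.2 (by linarith)⟩
  obtain ⟨hmD, hD1⟩ : D ∈ Ioo m 1 := hD ▸ rpow_one_div_one_sub_mul_mem_Ioo hm hxr (by linarith)
  have hD0 : 0 < D := hm.1.trans hmD
  set b := (2 * r - 1) * p
  have hratio : (1 - D ^ (b - q)) / (1 - D ^ b) ≤ (1 - m ^ (b - q)) / (1 - m ^ b) := by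
    rcases hpq.eq_or_lt with heq | hlt
    · simp [← heq]
    · exact one_sub_rpow_div_one_sub_rpow_anti (by linarith) (by linarith) hm.1.le hmD.le hD1
  have hratio_nonneg : 0 ≤ (1 - D ^ (b - q)) / (1 - D ^ b) :=
    div_nonneg (by linarith [rpow_le_one hD0.le hD1.le (sub_nonneg.2 hpq)])
      (by linarith [rpow_lt_one hD0.le hD1 (by linarith : 0 < b)])
  have hxq : x ^ q ≤ 1 := rpow_le_one hx.1.le hx.2.le (by linarith)
  calc m ^ q * x ^ q * (1 - D ^ (b - q)) / (1 - D ^ b)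
      = x ^ q * (m ^ q * ((1 - D ^ (b - q)) / (1 - D ^ b))) := by ring
    _ ≤ 1 * (m ^ q * ((1 - m ^ (b - q)) / (1 - m ^ b))) := by
      have hmq : 0 ≤ m ^ q := (rpow_pos_of_pos hm.1 q).le
      gcongr
    _ = m ^ q * (1 - m ^ (b - q)) / (1 - m ^ b) := by ring

theorem stmt_12 (p q r m x : ℝ) (hp : 1 < p) (hq : 1 < q) (hr : 1 < r)
    (hm : m ∈ Set.Ioo (0:ℝ) 1) (hx : x ∈ Set.Ioo (0:ℝ) 1) (hpq : q ≤ (2 * r - 1) * p)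
    (D : ℝ) (hD : D = (1 - (1 - m ^ (r - 1)) * x ^ (r - 1)) ^ (1 / (r - 1))) :
    m ^ q * x ^ q * (1 - D ^ ((2 * r - 1) * p - q)) / (1 - D ^ ((2 * r - 1) * p)) ≤
      m ^ q * (1 - m ^ ((2 * r - 1) * p - q)) / (1 - m ^ ((2 * r - 1) * p)) :=
  stmt_12_general p q r m x hq hr hm hx hpq D hD
end

section
/- Let p > 1, q > 1 with 1/p + 1/p* = 1, and let u : [-T,T] → ℝ satisfy u'(x) = (1 - |u(x)|^q)^{1/p} for all x ∈ [-T,T], with u'(-T) = u'(T) = 0 and u'(x) > 0 on (-T,T). Then for every real s ≥ 0, ∫_{-T}^{T} |u(x)|^{2s} dx = ((2s+1)p* + q)/((2s+1)p*) · ∫_{-T}^{T} |u(x)|^{q+2s} dx. -/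
/-!
Along a solution, `G = |u| ^ r * u * (1 - |u| ^ q) ^ (1 / p*)` is a Pohozaev-type flux: since
`(1 - |u| ^ q) ^ (1 / p*) * u' = 1 - |u| ^ q`, its derivative is
`(r + 1) |u| ^ r - (r + 1 + q / p*) |u| ^ (q + r)`. The boundary conditions `u'(±T) = 0` force
`|u(±T)| = 1`, so `G` vanishes at both ends and the fundamental theorem of calculus gives the
identity with `r = 2s`. Strict monotonicity keeps `|u| < 1` inside, where the chain rule applies.
-/

open Set intervalIntegral Filter Topology

theorem hasDerivAt_abs_rpow_mul_self {r : ℝ} (hr : 0 ≤ r) (y : ℝ) :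
    HasDerivAt (fun t : ℝ => |t| ^ r * t) ((r + 1) * |y| ^ r) y := by
  rcases eq_or_ne y 0 with rfl | hy
  · rcases hr.eq_or_lt with rfl | hr
    · simpa using hasDerivAt_id' (0 : ℝ)
    have hslope :
        (fun t : ℝ => |t| ^ r) =ᶠ[𝓝[≠] 0] slope (fun t : ℝ => |t| ^ r * t) 0 := by
      filter_upwards [self_mem_nhdsWithin] with t (ht : t ≠ 0)
      simp [slope_def_field, ht]
    have hlim : Tendsto (fun t : ℝ => |t| ^ r) (𝓝[≠] 0) (𝓝 0) := by
      have := (continuous_abs.rpow_const fun _ => Or.inr hr.le).tendsto (0 : ℝ)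
      simpa [Real.zero_rpow hr.ne'] using this.mono_left nhdsWithin_le_nhds
    rw [hasDerivAt_iff_tendsto_slope]
    simpa [Real.zero_rpow hr.ne'] using hlim.congr' hslope
  · have hpow := ((Real.hasDerivAt_rpow_const (p := r) (Or.inl (abs_ne_zero.2 hy))).comp y
      (hasDerivAt_abs hy)).mul (hasDerivAt_id' y)
    refine hpow.congr_deriv ?_
    have hy' : |y| ≠ 0 := abs_ne_zero.2 hy
    simp only [Function.comp_apply, mul_assoc, sign_mul_self, Real.rpow_sub_one hy', mul_one]
    field_simp

theorem HasDerivAt.abs_rpow_mul_self_mul_one_sub_abs_rpow {u : ℝ → ℝ} {x r q κ θ : ℝ}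
    (hr : 0 ≤ r) (hq : 1 < q) (hκθ : κ + θ = 1) (hx : 0 < 1 - |u x| ^ q)
    (hu : HasDerivAt u ((1 - |u x| ^ q) ^ θ) x) :
    HasDerivAt (fun x => |u x| ^ r * u x * (1 - |u x| ^ q) ^ κ)
      ((r + 1) * |u x| ^ r - (r + 1 + q * κ) * |u x| ^ (q + r)) x := by
  set y := u x
  have hpow : HasDerivAt (fun t : ℝ => |t| ^ r * t) ((r + 1) * |y| ^ r) y :=
    hasDerivAt_abs_rpow_mul_self hr y
  have hbase : HasDerivAt (fun t : ℝ => (1 - |t| ^ q) ^ κ)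
      (-(q * |y| ^ (q - 2) * y) * κ * (1 - |y| ^ q) ^ (κ - 1)) y :=
    ((hasDerivAt_abs_rpow y hq).const_sub 1).rpow_const (Or.inl hx.ne')
  refine ((hpow.mul hbase).comp x hu).congr_deriv ?_
  have hq_split : |y| ^ r * (|y| ^ (q - 2) * y * y) = |y| ^ (q + r) := by
    rw [mul_assoc, ← sq, ← sq_abs, ← Real.rpow_natCast, Nat.cast_ofNat,
      ← Real.rpow_add' (abs_nonneg _) (by linarith),
      ← Real.rpow_add' (abs_nonneg _) (by linarith)]
    ring_nf
  have hκ : (1 - |y| ^ q) ^ κ * (1 - |y| ^ q) ^ θ = 1 - |y| ^ q := by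
    rw [← Real.rpow_add hx, hκθ, Real.rpow_one]
  have hκ1 : (1 - |y| ^ q) ^ (κ - 1) * (1 - |y| ^ q) ^ θ = 1 := by
    rw [← Real.rpow_add hx, show κ - 1 + θ = 0 by linarith, Real.rpow_zero]
  have hqr : |y| ^ (q + r) = |y| ^ q * |y| ^ r := Real.rpow_add' (abs_nonneg _) (by linarith)
  linear_combination (r + 1) * |y| ^ r * hκ - q * κ * |y| ^ (q + r) * hκ1
    + (r + 1) * hqr - q * κ * (1 - |y| ^ q) ^ (κ - 1) * (1 - |y| ^ q) ^ θ * hq_split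

theorem eq_zero_of_rpow_eq_zero_of_frequently_rpow_pos {v : ℝ → ℝ} {e a : ℝ}
    (hv : ContinuousAt v e) (he : v e ^ a = 0) (hfreq : ∃ᶠ x in 𝓝 e, 0 < v x ^ a) :
    v e = 0 := by
  rcases lt_trichotomy (v e) 0 with hneg | hzero | hpos
  · -- on negative bases `x ^ a = exp (log x * a) * cos (a * π)`; `he` kills the cosine
    have hcos : Real.cos (a * Real.pi) = 0 := by
      simpa [Real.rpow_def_of_neg hneg, Real.exp_ne_zero] using he
    obtain ⟨x, hx, hxneg⟩ :=
      (hfreq.and_eventually (hv.eventually (gt_mem_nhds hneg))).exists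
    rw [Real.rpow_def_of_neg hxneg, hcos, mul_zero] at hx
    exact absurd hx (lt_irrefl 0)
  · exact hzero
  · exact absurd he (Real.rpow_pos_of_pos hpos a).ne'

theorem StrictMonoOn.abs_lt_of_mem_Ioo {u : ℝ → ℝ} {a b c x : ℝ}
    (hu : StrictMonoOn u (Icc a b)) (ha : |u a| ≤ c) (hb : |u b| ≤ c) (hx : x ∈ Ioo a b) :
    |u x| < c := by
  have hxa := hu (left_mem_Icc.2 (hx.1.trans hx.2).le) (Ioo_subset_Icc_self hx) hx.1
  have hxb := hu (Ioo_subset_Icc_self hx) (right_mem_Icc.2 (hx.1.trans hx.2).le) hx.2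
  rw [abs_le] at ha hb
  exact abs_lt.2 ⟨by linarith, by linarith⟩

section ODE

variable {u : ℝ → ℝ} {a b q θ : ℝ}

theorem one_sub_abs_rpow_eq_zero_of_deriv_eq_zero (hq : 0 ≤ q) (hab : a < b)
    (hder : ∀ x ∈ Icc a b, HasDerivAt u ((1 - |u x| ^ q) ^ θ) x)
    (hpos : ∀ x ∈ Ioo a b, 0 < deriv u x) {e : ℝ} (he : e ∈ Icc a b)
    (h0 : deriv u e = 0) : 1 - |u e| ^ q = 0 := by
  refine eq_zero_of_rpow_eq_zero_of_frequently_rpow_pos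
    (v := fun x => 1 - |u x| ^ q) (a := θ) ?_ ?_ ?_
  · exact continuousAt_const.sub
      ((continuous_abs.rpow_const fun _ => Or.inr hq).continuousAt.comp
        (hder e he).continuousAt)
  · rwa [← (hder e he).deriv]
  · have he' : e ∈ closure (Ioo a b) := by rwa [closure_Ioo hab.ne]
    exact (mem_closure_iff_frequently.1 he').mono fun x hx =>
      (hder x (Ioo_subset_Icc_self hx)).deriv ▸ hpos x hx

theorem one_sub_abs_rpow_pos_of_mem_Ioo (hq : 0 < q) (hab : a < b)
    (hder : ∀ x ∈ Icc a b, HasDerivAt u ((1 - |u x| ^ q) ^ θ) x)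
    (hpos : ∀ x ∈ Ioo a b, 0 < deriv u x) (hda : deriv u a = 0) (hdb : deriv u b = 0)
    {x : ℝ} (hx : x ∈ Ioo a b) : 0 < 1 - |u x| ^ q := by
  have hmono : StrictMonoOn u (Icc a b) :=
    strictMonoOn_of_deriv_pos (convex_Icc a b)
      (fun x hx => (hder x hx).continuousAt.continuousWithinAt)
      (by rwa [interior_Icc])
  have habs_le_one {e : ℝ} (he : e ∈ Icc a b) (h0 : deriv u e = 0) : |u e| ≤ 1 := by
    have h := one_sub_abs_rpow_eq_zero_of_deriv_eq_zero hq.le hab hder hpos he h0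
    rw [sub_eq_zero, eq_comm, ← Real.one_rpow q,
      Real.rpow_left_inj (abs_nonneg _) zero_le_one hq.ne'] at h
    exact h.le
  have hxlt := hmono.abs_lt_of_mem_Ioo (habs_le_one (left_mem_Icc.2 hab.le) hda)
    (habs_le_one (right_mem_Icc.2 hab.le) hdb) hx
  exact sub_pos.2 (Real.rpow_lt_one (abs_nonneg _) hxlt hq)

theorem integral_abs_rpow_eq_of_ode {r κ : ℝ} (hr : 0 ≤ r) (hq : 1 < q) (hκ : 0 < κ)
    (hκθ : κ + θ = 1) (hab : a ≤ b)
    (hder : ∀ x ∈ Icc a b, HasDerivAt u ((1 - |u x| ^ q) ^ θ) x)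
    (hint : ∀ x ∈ Ioo a b, 0 < 1 - |u x| ^ q)
    (ha : 1 - |u a| ^ q = 0) (hb : 1 - |u b| ^ q = 0) :
    (r + 1) * ∫ x in a..b, |u x| ^ r = (r + 1 + q * κ) * ∫ x in a..b, |u x| ^ (q + r) := by
  have hu : ContinuousOn u (Icc a b) := fun x hx => (hder x hx).continuousAt.continuousWithinAt
  have hcont {m : ℝ} (hm : 0 ≤ m) : ContinuousOn (fun x => |u x| ^ m) (uIcc a b) := by
    rw [uIcc_of_le hab]
    exact (continuous_abs.rpow_const fun _ => Or.inr hm).comp_continuousOn hu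
  have hrq : 0 ≤ q + r := by linarith
  have hG : ContinuousOn (fun x => |u x| ^ r * u x * (1 - |u x| ^ q) ^ κ) (Icc a b) :=
    ((continuous_abs.rpow_const fun _ => Or.inr hr).mul continuous_id |>.mul
      ((continuous_const.sub (continuous_abs.rpow_const fun _ => Or.inr (by linarith))).rpow_const
        fun _ => Or.inr hκ.le)).comp_continuousOn hu
  have hftc := integral_eq_sub_of_hasDerivAt_of_le hab hG
    (fun x hx => (hder x (Ioo_subset_Icc_self hx)).abs_rpow_mul_self_mul_one_sub_abs_rpow
      hr hq hκθ (hint x hx))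
    (((hcont hr).intervalIntegrable.const_mul _).sub
      ((hcont hrq).intervalIntegrable.const_mul _))
  rw [integral_sub ((hcont hr).intervalIntegrable.const_mul _)
    ((hcont hrq).intervalIntegrable.const_mul _), integral_const_mul, integral_const_mul,
    ha, hb, Real.zero_rpow hκ.ne'] at hftc
  linear_combination hftc

end ODE

theorem stmt_13 (p q T : ℝ) (hp : 1 < p) (hq : 1 < q) (hT : 0 < T)
    (pstar : ℝ) (hps : 1 / p + 1 / pstar = 1)
    (u : ℝ → ℝ)
    (hder : ∀ x ∈ Icc (-T) T, HasDerivAt u ((1 - |u x| ^ q) ^ (1 / p)) x)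
    (hbcl : deriv u (-T) = 0) (hbcr : deriv u T = 0)
    (hpos : ∀ x ∈ Ioo (-T) T, 0 < deriv u x)
    (s : ℝ) (hs : 0 ≤ s) :
    ∫ x in (-T)..T, |u x| ^ (2 * s) =
      ((2 * s + 1) * pstar + q) / ((2 * s + 1) * pstar) *
        ∫ x in (-T)..T, |u x| ^ (q + 2 * s) := by
  have hTT : -T < T := by linarith
  have hκ : 0 < 1 / pstar := by
    have : 1 / p < 1 := (div_lt_one (by linarith)).2 hp
    linarith
  have hpstar : 0 < pstar := one_div_pos.1 hκ
  have hbdry {e : ℝ} (he : e ∈ Icc (-T) T) (h0 : deriv u e = 0) : 1 - |u e| ^ q = 0 :=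
    one_sub_abs_rpow_eq_zero_of_deriv_eq_zero (by linarith) hTT hder hpos he h0
  have key := integral_abs_rpow_eq_of_ode (r := 2 * s) (by linarith) hq hκ (by linarith)
    hTT.le hder
    (fun x hx => one_sub_abs_rpow_pos_of_mem_Ioo (by linarith) hTT hder hpos hbcl hbcr hx)
    (hbdry (left_mem_Icc.2 hTT.le) hbcl) (hbdry (right_mem_Icc.2 hTT.le) hbcr)
  rw [div_mul_eq_mul_div, eq_div_iff (by positivity)]
  field_simp at key
  linear_combination key
end

section
/- Let p > 1, q > 1, and let u : [-T,T] → ℝ satisfy u'(x) = (1 - |u(x)|^q)^{1/p} for all x ∈ [-T,T], with u'(-T) = u'(T) = 0 and u'(x) > 0 on (-T,T). Then for every real s ≥ 0, ∫_{-T}^{T} |u(x)|^{2s} dx = ((2s+1)p* + q)/q · ∫_{-T}^{T} |u'(x)|^p · |u(x)|^{2s} dx, where p* = p/(p-1). -/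
/-!
Along the equation `u' = (1 - |u|^q)^(1/p)` the function `F = u |u|^(2s) (1 - |u|^q)^(1 - 1/p)`
has derivative `(2s + 1 + q/p*) |u|^(2s) |u'|^p - (q/p*) |u|^(2s)`, since `|u'|^p = 1 - |u|^q`.
Because `u'(±T) = 0` forces `|u(±T)| = 1`, `F` vanishes at both ends, and integrating `F'` over
`[-T, T]` gives the identity.
-/

open Set intervalIntegral
open Real Filter Topology MeasureTheory

theorem hasDerivAt_mul_abs_rpow {r : ℝ} (hr : 0 ≤ r) (t : ℝ) :
    HasDerivAt (fun t => t * |t| ^ r) ((r + 1) * |t| ^ r) t := by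
  rcases hr.eq_or_lt with rfl | hr
  · simpa using hasDerivAt_id' t
  by_cases ht : t = 0
  · subst ht
    rw [hasDerivAt_iff_tendsto_slope_zero]
    have hcont : Tendsto (fun h : ℝ => |h| ^ r) (𝓝 0) (𝓝 0) := by
      simpa [zero_rpow hr.ne'] using (continuous_abs.rpow_const fun _ => Or.inr hr.le).tendsto 0
    simp only [abs_zero, zero_rpow hr.ne', mul_zero]
    refine (hcont.mono_left nhdsWithin_le_nhds).congr' ?_
    filter_upwards [self_mem_nhdsWithin] with h (hh : h ≠ 0)
    simp [hh]
  · refine ((hasDerivAt_id' t).mul ((hasDerivAt_abs ht).rpow_const (p := r)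
      (Or.inl (abs_ne_zero.2 ht)))).congr_deriv ?_
    rw [rpow_sub_one (abs_ne_zero.2 ht)]
    field_simp
    linear_combination r * self_mul_sign t

theorem mul_self_mul_abs_rpow_sub_two {q : ℝ} (hq : q ≠ 0) (t : ℝ) :
    t * t * |t| ^ (q - 2) = |t| ^ q := by
  rw [← abs_mul_abs_self, ← sq, ← rpow_natCast,
    ← rpow_add' (abs_nonneg t) (by simpa using hq)]
  norm_num

theorem eq_zero_of_rpow_eq_zero_of_tendsto {f : ℝ → ℝ} {l : Filter ℝ} [l.NeBot]
    {x₀ y : ℝ} (hf : Tendsto f l (𝓝 (f x₀))) (hpos : ∀ᶠ x in l, 0 < f x ^ y)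
    (h0 : f x₀ ^ y = 0) : f x₀ = 0 := by
  rcases lt_trichotomy (f x₀) 0 with hneg | hzero | hpos₀
  · -- A negative base gives `exp (log x * y) * cos (y * π)`, whose vanishing depends on `y` only.
    have hcos : cos (y * π) = 0 := by
      simpa [rpow_def_of_neg hneg, exp_ne_zero] using h0
    obtain ⟨x, hxpos, hxneg⟩ := (hpos.and (hf.eventually (gt_mem_nhds hneg))).exists
    simp [rpow_def_of_neg hxneg, hcos] at hxpos
  · exact hzero
  · exact absurd h0 (rpow_pos_of_pos hpos₀ y).ne'

theorem hasDerivAt_mul_abs_rpow_mul_one_sub_abs_rpow {s q r t : ℝ} (hs : 0 ≤ s) (hq : 1 < q)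
    (ht : |t| < 1) :
    HasDerivAt (fun t => t * |t| ^ (2 * s) * (1 - |t| ^ q) ^ r)
      ((2 * s + 1) * |t| ^ (2 * s) * (1 - |t| ^ q) ^ r
        - r * q * |t| ^ (2 * s) * |t| ^ q * (1 - |t| ^ q) ^ (r - 1)) t := by
  have hbase : 1 - |t| ^ q ≠ 0 :=
    (sub_pos.2 (rpow_lt_one (abs_nonneg t) ht (by linarith))).ne'
  refine ((hasDerivAt_mul_abs_rpow (by positivity) t).mul
    (((hasDerivAt_abs_rpow t hq).const_sub 1).rpow_const (Or.inl hbase))).congr_deriv ?_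
  rw [← mul_self_mul_abs_rpow_sub_two (by positivity : q ≠ 0) t]
  ring

theorem hasDerivAt_mul_abs_rpow_mul_one_sub_abs_rpow_comp {u : ℝ → ℝ} {s q y x : ℝ}
    (hs : 0 ≤ s) (hq : 1 < q) (hu : HasDerivAt u ((1 - |u x| ^ q) ^ y) x) (hx : |u x| < 1) :
    HasDerivAt (fun x => u x * |u x| ^ (2 * s) * (1 - |u x| ^ q) ^ (1 - y))
      ((2 * s + 1 + (1 - y) * q) * (|u x| ^ (2 * s) * (1 - |u x| ^ q))
        - (1 - y) * q * |u x| ^ (2 * s)) x := by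
  refine ((hasDerivAt_mul_abs_rpow_mul_one_sub_abs_rpow (r := 1 - y) hs hq hx).comp x
    hu).congr_deriv ?_
  have hbase : 0 < 1 - |u x| ^ q := sub_pos.2 (rpow_lt_one (abs_nonneg _) hx (by linarith))
  have h₁ : (1 - |u x| ^ q) ^ (1 - y) * (1 - |u x| ^ q) ^ y = 1 - |u x| ^ q := by
    rw [← rpow_add hbase]; norm_num
  have h₂ : (1 - |u x| ^ q) ^ (1 - y - 1) * (1 - |u x| ^ q) ^ y = 1 := by
    rw [← rpow_add hbase]; norm_num
  linear_combination ((2 * s + 1) * |u x| ^ (2 * s)) * h₁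
    - ((1 - y) * q * |u x| ^ (2 * s) * |u x| ^ q) * h₂

theorem integral_abs_rpow_mul_one_sub_abs_rpow_eq {u : ℝ → ℝ} {a b s q y : ℝ}
    (hab : a ≤ b) (hs : 0 ≤ s) (hq : 1 < q) (hy : y < 1) (hcont : ContinuousOn u (Icc a b))
    (hder : ∀ x ∈ Ioo a b, HasDerivAt u ((1 - |u x| ^ q) ^ y) x)
    (hlt : ∀ x ∈ Ioo a b, |u x| < 1) (ha : |u a| = 1) (hb : |u b| = 1) :
    (2 * s + 1 + (1 - y) * q) * ∫ x in a..b, |u x| ^ (2 * s) * (1 - |u x| ^ q) =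
      (1 - y) * q * ∫ x in a..b, |u x| ^ (2 * s) := by
  have hcont_abs_rpow : ∀ r : ℝ, 0 ≤ r → ContinuousOn (fun x => |u x| ^ r) (Icc a b) :=
    fun r hr => hcont.abs.rpow_const (p := r) fun _ _ => Or.inr hr
  have hV : IntervalIntegrable (fun x => |u x| ^ (2 * s)) volume a b :=
    (hcont_abs_rpow _ (by positivity)).intervalIntegrable_of_Icc hab
  have hW : IntervalIntegrable (fun x => |u x| ^ (2 * s) * (1 - |u x| ^ q)) volume a b :=
    ((hcont_abs_rpow _ (by positivity)).mul
      (continuousOn_const.sub (hcont_abs_rpow q (by linarith)))).intervalIntegrable_of_Icc hab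
  have hF :
      ContinuousOn (fun x => u x * |u x| ^ (2 * s) * (1 - |u x| ^ q) ^ (1 - y)) (Icc a b) :=
    (hcont.mul (hcont_abs_rpow _ (by positivity))).mul
      ((continuousOn_const.sub (hcont_abs_rpow q (by linarith))).rpow_const
        fun _ _ => Or.inr (by linarith))
  have hFTC := integral_eq_sub_of_hasDerivAt_of_le hab hF
    (fun x hx => hasDerivAt_mul_abs_rpow_mul_one_sub_abs_rpow_comp hs hq (hder x hx) (hlt x hx))
    ((hW.const_mul _).sub (hV.const_mul _))
  rw [integral_sub (hW.const_mul _) (hV.const_mul _), intervalIntegral.integral_const_mul,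
    intervalIntegral.integral_const_mul] at hFTC
  simp only [ha, hb, one_rpow, sub_self, zero_rpow (by linarith : 1 - y ≠ 0), mul_zero] at hFTC
  linarith

theorem abs_eq_one_of_deriv_eq_zero {u : ℝ → ℝ} {a b p q x₀ : ℝ} (hab : a < b)
    (hq : 0 < q) (hder : ∀ x ∈ Icc a b, HasDerivAt u ((1 - |u x| ^ q) ^ (1 / p)) x)
    (hpos : ∀ x ∈ Ioo a b, 0 < deriv u x) (hx₀ : x₀ ∈ Icc a b) (h0 : deriv u x₀ = 0) :
    |u x₀| = 1 := by
  have : (𝓝[Ioo a b] x₀).NeBot :=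
    mem_closure_iff_nhdsWithin_neBot.1 (by rwa [closure_Ioo hab.ne])
  have hcont : ContinuousAt (fun x => 1 - |u x| ^ q) x₀ :=
    continuousAt_const.sub ((hder x₀ hx₀).continuousAt.abs.rpow_const (Or.inr hq.le))
  have hpos' : ∀ᶠ x in 𝓝[Ioo a b] x₀, 0 < (1 - |u x| ^ q) ^ (1 / p) := by
    filter_upwards [self_mem_nhdsWithin] with x hx
    exact (hder x (Ioo_subset_Icc_self hx)).deriv ▸ hpos x hx
  have hbase : 1 - |u x₀| ^ q = 0 :=
    eq_zero_of_rpow_eq_zero_of_tendsto (f := fun x => 1 - |u x| ^ q)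
      (hcont.tendsto.mono_left nhdsWithin_le_nhds) hpos'
      ((hder x₀ hx₀).deriv ▸ h0)
  rwa [sub_eq_zero, eq_comm, ← one_rpow q, rpow_left_inj (abs_nonneg _) zero_le_one hq.ne']
    at hbase

theorem abs_lt_of_strictMonoOn {u : ℝ → ℝ} {a b c x : ℝ} (hmono : StrictMonoOn u (Icc a b))
    (ha : |u a| ≤ c) (hb : |u b| ≤ c) (hx : x ∈ Ioo a b) : |u x| < c := by
  have hab : a ≤ b := (hx.1.trans hx.2).le
  exact abs_lt.2
    ⟨(neg_le_of_abs_le ha).trans_lt (hmono (left_mem_Icc.2 hab) (Ioo_subset_Icc_self hx) hx.1),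
      (hmono (Ioo_subset_Icc_self hx) (right_mem_Icc.2 hab) hx.2).trans_le (le_of_abs_le hb)⟩

theorem stmt_14 (p q T : ℝ) (hp : 1 < p) (hq : 1 < q) (hT : 0 < T)
    (u : ℝ → ℝ)
    (hder : ∀ x ∈ Icc (-T) T, HasDerivAt u ((1 - |u x| ^ q) ^ (1 / p)) x)
    (hbcl : deriv u (-T) = 0) (hbcr : deriv u T = 0)
    (hpos : ∀ x ∈ Ioo (-T) T, 0 < deriv u x)
    (s : ℝ) (hs : 0 ≤ s) :
    ∫ x in (-T)..T, |u x| ^ (2 * s) =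
      ((2 * s + 1) * (p / (p - 1)) + q) / q *
        ∫ x in (-T)..T, |deriv u x| ^ p * |u x| ^ (2 * s) := by
  have hT' : -T < T := by linarith
  have hL := abs_eq_one_of_deriv_eq_zero hT' (by linarith) hder hpos (left_mem_Icc.2 hT'.le) hbcl
  have hR := abs_eq_one_of_deriv_eq_zero hT' (by linarith) hder hpos (right_mem_Icc.2 hT'.le) hbcr
  have hcont : ContinuousOn u (Icc (-T) T) :=
    fun x hx => (hder x hx).continuousAt.continuousWithinAt
  have hlt : ∀ x ∈ Ioo (-T) T, |u x| < 1 := fun x =>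
    abs_lt_of_strictMonoOn (strictMonoOn_of_deriv_pos (convex_Icc _ _) hcont
      (by rwa [interior_Icc])) hL.le hR.le
  have hbase : ∀ x ∈ Icc (-T) T, 0 ≤ 1 - |u x| ^ q := by
    intro x hx
    rcases eq_endpoints_or_mem_Ioo_of_mem_Icc hx with rfl | rfl | hx
    · simp [hL]
    · simp [hR]
    · exact sub_nonneg.2 (rpow_le_one (abs_nonneg _) (hlt x hx).le (by linarith))
  have hW : ∫ x in (-T)..T, |deriv u x| ^ p * |u x| ^ (2 * s) =
      ∫ x in (-T)..T, |u x| ^ (2 * s) * (1 - |u x| ^ q) := by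
    refine integral_congr fun x hx => ?_
    rw [uIcc_of_le hT'.le] at hx
    rw [(hder x hx).deriv, abs_of_nonneg (rpow_nonneg (hbase x hx) _), one_div,
      rpow_inv_rpow (hbase x hx) (by linarith), mul_comm]
  have key := integral_abs_rpow_mul_one_sub_abs_rpow_eq hT'.le hs hq
    (by rw [div_lt_one] <;> linarith) hcont (fun x hx => hder x (Ioo_subset_Icc_self hx))
    hlt hL hR
  rw [hW]
  have hp₀ : p ≠ 0 := by linarith
  have hp₁ : p - 1 ≠ 0 := by linarith
  field_simp at key ⊢
  linear_combination -key
end
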